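/- Derivative estimation via kernel derivative: Let 𝒦 : ℝ → ℝ be a continuously differentiable symmetric (𝒦(−v) = 𝒦(v)) probability density supported in [−1, 1] with 𝒦(−1) = 𝒦(1) = 0 and bounded derivative 𝒦′. Let h : [0,1] → ℝ be three times continuously differentiable with ‖h‴‖_∞ ≤ B₀. Then for every s ∈ (0,1) and every bandwidth a with 0 < a ≤ min{s, 1−s}, | ∫₀¹ a^{−2} h(u) 𝒦′((s−u)/a) du − h′(s) | ≤ (B₀ a² / 6) ∫_{−1}^{1} |v|³ |𝒦′(v)| dv. -/

import Mathlib

/-!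
Substituting `u = s - a v` turns the estimator into `a⁻¹ ∫_{-1}^1 h(s - a v) 𝒦'(v) dv`: the
condition `a ≤ min s (1 - s)` keeps `s - a v` inside `[0, 1]`, and `𝒦'` vanishes off `(-1, 1)`.
Integrating by parts against `𝒦(±1) = 0`, a quadratic `q(v) = α + β v + γ v²` satisfies
`∫ q 𝒦' = -∫ q' 𝒦 = -β`, since `𝒦` has mass one and, being even, first moment zero. So
after subtracting the second-order Taylor polynomial of `h` at `s` (for which `β = -a h'(s)`),
only the Lagrange remainder is left, and it is at most `B₀ |a v|³ / 6`.
-/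

open MeasureTheory Set Function intervalIntegral

theorem integral_eq_zero_of_odd {f : ℝ → ℝ} (hf : ∀ x, f (-x) = -f x) (b : ℝ) :
    ∫ x in -b..b, f x = 0 := by
  have h := integral_comp_neg (a := -b) (b := b) f
  simp only [hf, intervalIntegral.integral_neg, neg_neg] at h
  linarith

theorem integral_quadratic_mul_deriv_eq {K : ℝ → ℝ} (hK : ContDiff ℝ 1 K)
    (hsymm : ∀ v, K (-v) = K v) (hKneg1 : K (-1) = 0) (hK1 : K 1 = 0)
    (hone : ∫ v in (-1 : ℝ)..1, K v = 1) (α β γ : ℝ) :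
    ∫ v in (-1 : ℝ)..1, (α + β * v + γ * v ^ 2) * deriv K v = -β := by
  have hodd : ∫ v in (-1 : ℝ)..1, v * K v = 0 :=
    integral_eq_zero_of_odd (fun v => by rw [hsymm]; ring) 1
  have hquad (v : ℝ) : HasDerivAt (fun v => α + β * v + γ * v ^ 2) (β + 2 * γ * v) v := by
    refine ((((hasDerivAt_id' v).const_mul β).const_add α).fun_add
      ((hasDerivAt_pow 2 v).const_mul γ)).congr_deriv ?_
    push_cast
    ring
  rw [integral_mul_deriv_eq_deriv_mul (fun v _ => hquad v)
    (fun v _ => ((hK.differentiable one_ne_zero) v).hasDerivAt)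
    ((by fun_prop : Continuous fun v => β + 2 * γ * v).intervalIntegrable _ _)
    ((hK.continuous_deriv le_rfl).intervalIntegrable _ _)]
  have hsplit : ∫ v in (-1 : ℝ)..1, (β + 2 * γ * v) * K v
      = β * (∫ v in (-1 : ℝ)..1, K v) + 2 * γ * ∫ v in (-1 : ℝ)..1, v * K v := by
    simp only [add_mul, mul_assoc]
    rw [intervalIntegral.integral_add ((by fun_prop : Continuous _).intervalIntegrable _ _)
      ((by fun_prop : Continuous _).intervalIntegrable _ _), intervalIntegral.integral_const_mul,
      intervalIntegral.integral_const_mul, intervalIntegral.integral_const_mul]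
  rw [hsplit, hone, hodd, hK1, hKneg1]
  ring

theorem intervalIntegral_eq_integral_of_eq_zero_off_Icc {f : ℝ → ℝ} {a b : ℝ}
    (hf : ∀ x ∉ Icc a b, f x = 0) (ha : f a = 0) : ∫ x in a..b, f x = ∫ x, f x := by
  refine integral_eq_integral_of_support_subset (support_subset_iff'.2 fun x hx => ?_)
  rcases eq_or_ne x a with rfl | hxa
  · exact ha
  exact hf x fun hx' => hx ⟨lt_of_le_of_ne hx'.1 hxa.symm, hx'.2⟩

theorem deriv_eq_zero_of_notMem_Ioo {f : ℝ → ℝ} {a b x : ℝ} (hf' : Continuous (deriv f))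
    (hf : ∀ y ∉ Icc a b, f y = 0) (hx : x ∉ Ioo a b) : deriv f x = 0 := by
  have htsupp : tsupport f ⊆ Icc a b :=
    closure_minimal (support_subset_iff'.2 hf) isClosed_Icc
  have hcompl : (Icc a b)ᶜ ⊆ {y | deriv f y = 0} := fun y hy =>
    notMem_support.1 fun hy' => hy (htsupp (support_deriv_subset hy'))
  have hclosure := closure_minimal hcompl (isClosed_eq hf' continuous_const)
  rw [closure_compl, interior_Icc] at hclosure
  exact hclosure hx

theorem integral_mul_comp_div_eq {F g : ℝ → ℝ} {p q s a : ℝ} (ha : 0 < a) (hp : p ≤ s - a)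
    (hq : s + a ≤ q) (hg : ∀ v ∉ Ioo (-1 : ℝ) 1, g v = 0) :
    ∫ u in p..q, F u * g ((s - u) / a) = a * ∫ v in (-1 : ℝ)..1, F (s - a * v) * g v := by
  have hsupp : support (fun u => F u * g ((s - u) / a)) ⊆ Ioc (s - a) (s + a) := by
    refine (support_subset_iff'.2 fun u hu => mul_eq_zero_of_right _ (hg _ ?_)).trans
      Ioo_subset_Ioc_self
    rintro ⟨h1, h2⟩
    rw [lt_div_iff₀ ha] at h1
    rw [div_lt_iff₀ ha] at h2
    exact hu ⟨by linarith, by linarith⟩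
  have hcomp := integral_comp_sub_mul (a := -1) (b := 1) (fun u => F u * g ((s - u) / a))
    ha.ne' s
  simp only [sub_sub_cancel, mul_div_cancel_left₀ _ ha.ne', mul_one, mul_neg, sub_neg_eq_add,
    smul_eq_mul] at hcomp
  rw [integral_eq_integral_of_support_subset (hsupp.trans (Ioc_subset_Ioc hp hq)),
    ← integral_eq_integral_of_support_subset hsupp, hcomp, mul_inv_cancel_left₀ ha.ne']

theorem abs_sub_taylor_two_le {f : ℝ → ℝ} {x₀ x B : ℝ}
    (hf : ContDiffOn ℝ 3 f (uIcc x₀ x)) (hx₀ : ContDiffAt ℝ 2 f x₀)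
    (hB : ∀ y ∈ uIoo x₀ x, |iteratedDeriv 3 f y| ≤ B) :
    |f x - (f x₀ + deriv f x₀ * (x - x₀) + iteratedDeriv 2 f x₀ / 2 * (x - x₀) ^ 2)|
      ≤ B / 6 * |x - x₀| ^ 3 := by
  rcases eq_or_ne x₀ x with rfl | hne
  · simp
  obtain ⟨y, hy, hrem⟩ := taylor_mean_remainder_lagrange_iteratedDeriv (n := 2) hne hf
  have hwithin (k : ℕ) (hk : k ≤ 2) :
      iteratedDerivWithin k f (uIcc x₀ x) x₀ = iteratedDeriv k f x₀ :=
    iteratedDerivWithin_eq_iteratedDeriv (uniqueDiffOn_uIcc hne)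
      (hx₀.of_le (by exact_mod_cast hk)) left_mem_uIcc
  simp only [taylor_within_apply, Finset.sum_range_succ, Finset.sum_range_zero,
    hwithin 0 (by norm_num), hwithin 1 (by norm_num), hwithin 2 (by norm_num),
    iteratedDeriv_zero, iteratedDeriv_one] at hrem
  norm_num [Nat.factorial] at hrem
  rw [show f x - (f x₀ + deriv f x₀ * (x - x₀) + iteratedDeriv 2 f x₀ / 2 * (x - x₀) ^ 2)
      = iteratedDeriv 3 f y * (x - x₀) ^ 3 / 6 by rw [← hrem]; ring,
    abs_div, abs_mul, abs_pow, abs_of_pos (by norm_num : (0 : ℝ) < 6)]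
  linarith [mul_le_mul_of_nonneg_right (hB y hy) (pow_nonneg (abs_nonneg (x - x₀)) 3)]

theorem abs_sub_taylor_two_le_of_contDiffOn_Icc {f : ℝ → ℝ} {p q x₀ x B : ℝ}
    (hf : ContDiffOn ℝ 3 f (Icc p q))
    (hB : ∀ y ∈ Ioo p q, |iteratedDerivWithin 3 f (Icc p q) y| ≤ B)
    (hx₀ : x₀ ∈ Ioo p q) (hx : x ∈ Icc p q) :
    |f x - (f x₀ + deriv f x₀ * (x - x₀) + iteratedDeriv 2 f x₀ / 2 * (x - x₀) ^ 2)|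
      ≤ B / 6 * |x - x₀| ^ 3 := by
  have hsub : uIcc x₀ x ⊆ Icc p q := uIcc_subset_Icc (Ioo_subset_Icc_self hx₀) hx
  refine abs_sub_taylor_two_le (hf.mono hsub)
    ((hf.contDiffAt (Icc_mem_nhds hx₀.1 hx₀.2)).of_le (by norm_num)) fun y hy => ?_
  have hy' : y ∈ Ioo p q := Ioo_subset_Ioo (le_inf hx₀.1.le hx.1) (sup_le hx₀.2.le hx.2) hy
  rw [← iteratedDerivWithin_eq_iteratedDeriv (uniqueDiffOn_Icc (hx₀.1.trans hx₀.2))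
    (hf.contDiffAt (Icc_mem_nhds hy'.1 hy'.2)) (Ioo_subset_Icc_self hy')]
  exact hB y hy'

theorem abs_sub_taylor_two_sub_mul_le {f : ℝ → ℝ} {p q x₀ B a v : ℝ}
    (hf : ContDiffOn ℝ 3 f (Icc p q))
    (hB : ∀ y ∈ Ioo p q, |iteratedDerivWithin 3 f (Icc p q) y| ≤ B) (ha : 0 < a)
    (hx₀ : x₀ ∈ Ioo p q) (hx : x₀ - a * v ∈ Icc p q) :
    |f (x₀ - a * v)
        - (f x₀ + -(a * deriv f x₀) * v + a ^ 2 * iteratedDeriv 2 f x₀ / 2 * v ^ 2)|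
      ≤ B * a ^ 3 / 6 * |v| ^ 3 := by
  have htaylor := abs_sub_taylor_two_le_of_contDiffOn_Icc hf hB hx₀ hx
  rw [show x₀ - a * v - x₀ = -(a * v) by ring, abs_neg, abs_mul, abs_of_pos ha] at htaylor
  convert htaylor.trans_eq (by ring : B / 6 * (a * |v|) ^ 3 = B * a ^ 3 / 6 * |v| ^ 3) using 2
  ring

theorem abs_integral_mul_deriv_add_le {K φ : ℝ → ℝ} (hK : ContDiff ℝ 1 K)
    (hsymm : ∀ v, K (-v) = K v) (hKneg1 : K (-1) = 0) (hK1 : K 1 = 0)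
    (hone : ∫ v in (-1 : ℝ)..1, K v = 1) (hφ : ContinuousOn φ (Icc (-1) 1)) {α β γ C : ℝ}
    (happrox : ∀ v ∈ Icc (-1 : ℝ) 1, |φ v - (α + β * v + γ * v ^ 2)| ≤ C * |v| ^ 3) :
    |(∫ v in (-1 : ℝ)..1, φ v * deriv K v) + β|
      ≤ C * ∫ v in (-1 : ℝ)..1, |v| ^ 3 * |deriv K v| := by
  have hc : Continuous (deriv K) := hK.continuous_deriv le_rfl
  have hremainder : (∫ v in (-1 : ℝ)..1, φ v * deriv K v) + β
      = ∫ v in (-1 : ℝ)..1, (φ v - (α + β * v + γ * v ^ 2)) * deriv K v := by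
    simp only [sub_mul]
    rw [intervalIntegral.integral_sub (f := fun v => φ v * deriv K v)
      ((hφ.mul hc.continuousOn).intervalIntegrable_of_Icc (by norm_num))
      ((by fun_prop : Continuous fun v => (α + β * v + γ * v ^ 2) * deriv K v).intervalIntegrable
        _ _),
      integral_quadratic_mul_deriv_eq hK hsymm hKneg1 hK1 hone]
    ring
  rw [hremainder, ← intervalIntegral.integral_const_mul, ← Real.norm_eq_abs]
  refine norm_integral_le_of_norm_le (by norm_num : (-1 : ℝ) ≤ 1)
    (ae_of_all _ fun v hv => ?_)
    ((by fun_prop : Continuous fun v => C * (|v| ^ 3 * |deriv K v|)).intervalIntegrable _ _)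
  rw [Real.norm_eq_abs, abs_mul, ← mul_assoc]
  exact mul_le_mul_of_nonneg_right (happrox v (Ioc_subset_Icc_self hv)) (abs_nonneg _)

theorem kernel_deriv_estimation (𝒦 : ℝ → ℝ)
    (hK : ContDiff ℝ 1 𝒦)
    (hsymm : ∀ v, 𝒦 (-v) = 𝒦 v)
    (hsupp : ∀ v, v ∉ Set.Icc (-1 : ℝ) 1 → 𝒦 v = 0)
    (hone : ∫ v, 𝒦 v = 1)
    (hKneg1 : 𝒦 (-1) = 0) (hK1 : 𝒦 1 = 0)
    (B₀ : ℝ) (h : ℝ → ℝ)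
    (hh : ContDiffOn ℝ 3 h (Set.Icc 0 1))
    (hh3 : ∀ u ∈ Set.Icc (0 : ℝ) 1, |iteratedDerivWithin 3 h (Set.Icc 0 1) u| ≤ B₀)
    (s : ℝ) (hs : s ∈ Set.Ioo (0 : ℝ) 1)
    (a : ℝ) (ha : 0 < a) (ha' : a ≤ min s (1 - s)) :
    |(∫ u in (0 : ℝ)..1, a⁻¹ ^ 2 * h u * deriv 𝒦 ((s - u) / a)) -
        derivWithin h (Set.Icc 0 1) s| ≤
      B₀ * a ^ 2 / 6 * ∫ v in (-1 : ℝ)..1, |v| ^ 3 * |deriv 𝒦 v| := by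
  have hc : Continuous (deriv 𝒦) := hK.continuous_deriv le_rfl
  have has : a ≤ s := ha'.trans (min_le_left _ _)
  have has' : a ≤ 1 - s := ha'.trans (min_le_right _ _)
  have hmem : ∀ v ∈ Icc (-1 : ℝ) 1, s - a * v ∈ Icc (0 : ℝ) 1 := fun v hv =>
    ⟨by nlinarith [hv.2], by nlinarith [hv.1]⟩
  have hrescale : ∫ u in (0 : ℝ)..1, a⁻¹ ^ 2 * h u * deriv 𝒦 ((s - u) / a)
      = a⁻¹ ^ 2 * (a * ∫ v in (-1 : ℝ)..1, h (s - a * v) * deriv 𝒦 v) := by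
    simp_rw [mul_assoc]
    rw [intervalIntegral.integral_const_mul, integral_mul_comp_div_eq ha (by linarith)
      (by linarith) fun v hv => deriv_eq_zero_of_notMem_Ioo hc hsupp hv]
  have hest := abs_integral_mul_deriv_add_le hK hsymm hKneg1 hK1
    ((intervalIntegral_eq_integral_of_eq_zero_off_Icc hsupp hKneg1).trans hone)
    (φ := fun v => h (s - a * v)) (hh.continuousOn.comp (by fun_prop) hmem) fun v hv =>
      abs_sub_taylor_two_sub_mul_le hh (fun y hy => hh3 y (Ioo_subset_Icc_self hy)) ha hs
        (hmem v hv)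
  have hfactor (I : ℝ) : a⁻¹ ^ 2 * (a * I) - deriv h s = a⁻¹ * (I + -(a * deriv h s)) := by
    field_simp
    ring
  rw [hrescale, derivWithin_of_mem_nhds (Icc_mem_nhds hs.1 hs.2), hfactor, abs_mul,
    abs_of_pos (inv_pos.2 ha)]
  calc _ ≤ a⁻¹ * (B₀ * a ^ 3 / 6 * ∫ v in (-1 : ℝ)..1, |v| ^ 3 * |deriv 𝒦 v|) := by
        gcongr
    _ = _ := by field_simp
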